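/- Let k be a field and n ≥ 0. Let A_{n+1} be the linear quiver with vertex set {1,…,n+1} and arrow set {1,…,n}, where arrow i has start i and terminus i+1. Let s_*, t_* : k^{(Γ₁)} → k^{(Γ₀)} be the k-linear maps between the free vector spaces on the arrow set and the vertex set induced on basis elements by s and t. Then there exist k-linear isomorphisms ψ₁ : k^{(Γ₁)} → V_{n−1} and ψ₀ : k^{(Γ₀)} → V_n such that ψ₀ ∘ s_* equals (multiplication by x) ∘ ψ₁ and ψ₀ ∘ t_* equals (multiplication by y) ∘ ψ₁; that is, the linearization k^{(A_{n+1})} is isomorphic as a Kronecker representation to P(n) = (V_{n−1} ⇉ V_n; multiplication by x, multiplication by y). -/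

import Mathlib

open MvPolynomial

noncomputable section

/-- Polynomials in two variables `x = X 0`, `y = X 1`. -/
abbrev Poly2 (k : Type) [Field k] := MvPolynomial (Fin 2) k

/-- `Vd k n` is the space `V_n` of homogeneous polynomials of degree `n`. -/
abbrev Vd (k : Type) [Field k] (n : ℕ) : Submodule k (Poly2 k) :=
  homogeneousSubmodule (Fin 2) k n

/-- `Vm k n` is the space `V_{n-1}`, with `V_{-1} = 0`. -/
abbrev Vm (k : Type) [Field k] : ℕ → Submodule k (Poly2 k)
  | 0 => ⊥
  | n+1 => Vd k n

theorem Vm_mul_mem (k : Type) [Field k] (n : ℕ) {c : Poly2 k} (hc : c.IsHomogeneous 1)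
    {g : Poly2 k} (hg : g ∈ Vm k n) : c * g ∈ Vd k n := by
  cases n with
  | zero =>
      rw [Submodule.mem_bot] at hg
      subst hg
      rw [mul_zero]
      exact Submodule.zero_mem (Vd k 0)
  | succ m =>
      rw [mem_homogeneousSubmodule] at hg ⊢
      simpa [Nat.add_comm] using hc.mul hg

/-- Multiplication by the variable `X j`, as a linear map `V_{n-1} → V_n`. -/
def mulVar (k : Type) [Field k] (n : ℕ) (j : Fin 2) : Vm k n →ₗ[k] Vd k n where
  toFun g := ⟨X j * g.1, Vm_mul_mem k n (isHomogeneous_X k j) g.2⟩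
  map_add' a b := by ext; simp [mul_add]
  map_smul' c a := by ext; simp [mul_smul_comm]

/-- Multiplication by `x`. -/
def mulX (k : Type) [Field k] (n : ℕ) : Vm k n →ₗ[k] Vd k n := mulVar k n 0
/-- Multiplication by `y`. -/
def mulY (k : Type) [Field k] (n : ℕ) : Vm k n →ₗ[k] Vd k n := mulVar k n 1

end

/-! The monomials `x ^ (n - i) * y ^ i`, `0 ≤ i ≤ n`, form a basis of `V_n`. Send vertex `i` to
`x ^ (n - i) * y ^ i ∈ V_n` and arrow `i` to `x ^ (n - 1 - i) * y ^ i ∈ V_{n-1}`: multiplying the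
image of arrow `i` by `x` gives the image of its start `i`, and multiplying by `y` the image of its
terminus `i + 1`. -/

noncomputable section

open MvPolynomial

lemma Finsupp.degree_fin_two (d : Fin 2 →₀ ℕ) : d.degree = d 0 + d 1 := by
  rw [Finsupp.degree_eq_sum, Fin.sum_univ_two]

def monomialExponent (n : ℕ) (i : Fin (n + 1)) : Fin 2 →₀ ℕ :=
  Finsupp.single 0 (n - i : ℕ) + Finsupp.single 1 (i : ℕ)

lemma degree_monomialExponent (n : ℕ) (i : Fin (n + 1)) : (monomialExponent n i).degree = n := by
  simp [Finsupp.degree_fin_two, monomialExponent]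
  omega

lemma monomialExponent_injective (n : ℕ) : Function.Injective (monomialExponent n) :=
  fun i j h => Fin.ext <| by simpa [monomialExponent] using congrArg (· 1) h

lemma range_monomialExponent (n : ℕ) :
    Set.range (monomialExponent n) = {d | d.degree = n} := by
  ext d
  refine ⟨by rintro ⟨i, rfl⟩; exact degree_monomialExponent n i, fun hd => ?_⟩
  rw [Set.mem_ofPred_eq, Finsupp.degree_fin_two] at hd
  refine ⟨⟨d 1, by omega⟩, ?_⟩
  ext j
  fin_cases j <;> simp [monomialExponent]
  omega

lemma single_zero_add_monomialExponent (n : ℕ) (i : Fin (n + 1)) :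
    Finsupp.single 0 1 + monomialExponent n i = monomialExponent (n + 1) i.castSucc := by
  ext j
  fin_cases j <;> simp [monomialExponent]
  omega

lemma single_one_add_monomialExponent (n : ℕ) (i : Fin (n + 1)) :
    Finsupp.single 1 1 + monomialExponent n i = monomialExponent (n + 1) i.succ := by
  ext j
  fin_cases j <;> simp [monomialExponent]
  omega

lemma span_monomial_monomialExponent (R : Type*) [CommSemiring R] (n : ℕ) :
    Submodule.span R (Set.range fun i => monomial (monomialExponent n i) (1 : R)) =
      homogeneousSubmodule (Fin 2) R n := by
  rw [homogeneousSubmodule_eq_finsupp_supported, ← restrictSupport, restrictSupport_eq_span,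
    ← range_monomialExponent, ← Set.range_comp]
  rfl

def homogeneousBasis (R : Type*) [CommRing R] (n : ℕ) :
    Module.Basis (Fin (n + 1)) R (homogeneousSubmodule (Fin 2) R n) :=
  .mk (v := fun i => ⟨monomial (monomialExponent n i) 1,
      isHomogeneous_monomial _ (degree_monomialExponent n i)⟩)
    (LinearIndependent.of_comp (homogeneousSubmodule (Fin 2) R n).subtype <|
      (basisMonomials (Fin 2) R).linearIndependent.comp _ (monomialExponent_injective n))
    (by
      rw [top_le_iff]
      apply Submodule.map_injective_of_injective (Submodule.injective_subtype _)
      rw [Submodule.map_span, ← Set.range_comp, Submodule.map_subtype_top]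
      exact span_monomial_monomialExponent R n)

lemma coe_homogeneousBasis_repr_symm_single (R : Type*) [CommRing R] (n : ℕ) (i : Fin (n + 1))
    (c : R) :
    ((homogeneousBasis R n).repr.symm (Finsupp.single i c) : MvPolynomial (Fin 2) R) =
      monomial (monomialExponent n i) c := by
  simp [homogeneousBasis, smul_monomial]

lemma homogeneousBasis_repr_symm_lmapDomain (k : Type) [Field k] (m : ℕ) (j : Fin 2)
    {f : Fin (m + 1) → Fin (m + 2)}
    (hf : ∀ i, Finsupp.single j 1 + monomialExponent m i = monomialExponent (m + 1) (f i))
    (c : Fin (m + 1) →₀ k) :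
    (homogeneousBasis k (m + 1)).repr.symm (Finsupp.lmapDomain k k f c) =
      mulVar k (m + 1) j ((homogeneousBasis k m).repr.symm c) := by
  induction c using Finsupp.induction_linear with
  | zero => simp
  | add c d hc hd => simp only [map_add, hc, hd]
  | single i b =>
    ext1
    simp only [Finsupp.lmapDomain_apply, Finsupp.mapDomain_single, mulVar, LinearMap.coe_mk,
      AddHom.coe_mk, coe_homogeneousBasis_repr_symm_single]
    rw [X, monomial_mul, one_mul, hf]

end

/-- the linearization `k^{(A_{n+1})}` of the linear quiver
`A_{n+1}` (vertices `Fin (n+1)`, arrows `Fin n`, arrow `i` from `i` to `i+1`,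
so start map `Fin.castSucc` and terminus map `Fin.succ`) is isomorphic, as a
Kronecker representation, to `P(n) = (V_{n-1} ⇉ V_n; x·, y·)`.  The induced
maps `s_*, t_*` on the free vector spaces are `Finsupp.lmapDomain`. -/
theorem stmt7 (k : Type) [Field k] (n : ℕ) :
    ∃ (ψ₁ : (Fin n →₀ k) ≃ₗ[k] Vm k n) (ψ₀ : (Fin (n+1) →₀ k) ≃ₗ[k] Vd k n),
      (∀ c : Fin n →₀ k,
        ψ₀ (Finsupp.lmapDomain k k (Fin.castSucc : Fin n → Fin (n+1)) c)
          = mulX k n (ψ₁ c)) ∧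
      (∀ c : Fin n →₀ k,
        ψ₀ (Finsupp.lmapDomain k k (Fin.succ : Fin n → Fin (n+1)) c)
          = mulY k n (ψ₁ c)) := by
  cases n with
  | zero =>
    exact ⟨.ofSubsingleton _ _, (homogeneousBasis k 0).repr.symm,
      fun c => by simp [Subsingleton.elim c 0], fun c => by simp [Subsingleton.elim c 0]⟩
  | succ m =>
    exact ⟨(homogeneousBasis k m).repr.symm, (homogeneousBasis k (m + 1)).repr.symm,
      homogeneousBasis_repr_symm_lmapDomain k m 0 (single_zero_add_monomialExponent m),
      homogeneousBasis_repr_symm_lmapDomain k m 1 (single_one_add_monomialExponent m)⟩
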